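/- For every n ≥ 1, the symmetric topological complexity of the n-sphere satisfies TC^S(S^n) ≤ 3; that is, the configuration space F(S^n;2) can be covered by two Z/2-invariant open sets over each of which the restricted endpoint fibration π' : P'S^n → F(S^n;2) admits a continuous Z/2-equivariant section. -/

import Mathlib

open scoped ENat

universe u v

/-- Space of paths in `X`: continuous maps from the unit interval. -/
abbrev PathSp (X : Type u) [TopologicalSpace X] := C(unitInterval, X)

/-- Reversal of a path. -/
def pathRev {X : Type u} [TopologicalSpace X] (γ : PathSp X) : PathSp X :=
  γ.comp ⟨unitInterval.symm, unitInterval.continuous_symm⟩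

/-- `P'X`: paths with distinct endpoints. -/
def PpX (X : Type u) [TopologicalSpace X] := {γ : PathSp X // γ 0 ≠ γ 1}

instance (X : Type u) [TopologicalSpace X] : TopologicalSpace (PpX X) :=
  instTopologicalSpaceSubtype

/-- Reversal involution on `P'X`. -/
def revP {X : Type u} [TopologicalSpace X] (γ : PpX X) : PpX X :=
  ⟨pathRev γ.1, by
    simp only [pathRev, ContinuousMap.comp_apply, ContinuousMap.coe_mk,
      unitInterval.symm_zero, unitInterval.symm_one]
    exact γ.2.symm⟩

/-- `F(X;2)`: ordered configuration space of two distinct points. -/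
def F2 (X : Type u) [TopologicalSpace X] := {z : X × X // z.1 ≠ z.2}

instance (X : Type u) [TopologicalSpace X] : TopologicalSpace (F2 X) :=
  instTopologicalSpaceSubtype

/-- The swap involution on `F(X;2)`. -/
def swapF {X : Type u} [TopologicalSpace X] (z : F2 X) : F2 X :=
  ⟨(z.1.2, z.1.1), z.2.symm⟩

/-- The two-endpoint map `π' : P'X → F(X;2)`. -/
def pip {X : Type u} [TopologicalSpace X] (γ : PpX X) : F2 X :=
  ⟨(γ.1 0, γ.1 1), γ.2⟩

/-- Quotient of `P'X` by the reversal involution. -/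
def PpQ (X : Type u) [TopologicalSpace X] := Quot (fun a b : PpX X => b = revP a)

/-- `B(X;2)`: unordered configuration space, quotient of `F(X;2)` by the swap. -/
def BX2 (X : Type u) [TopologicalSpace X] := Quot (fun a b : F2 X => b = swapF a)

instance (X : Type u) [TopologicalSpace X] : TopologicalSpace (PpQ X) :=
  inferInstanceAs (TopologicalSpace (Quot _))
instance (X : Type u) [TopologicalSpace X] : TopologicalSpace (BX2 X) :=
  inferInstanceAs (TopologicalSpace (Quot _))

/-- The quotient fibration `π_G : P'X/G → B(X;2)`. -/
def piG (X : Type u) [TopologicalSpace X] : PpQ X → BX2 X :=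
  Quot.map pip (by
    rintro a b rfl
    refine Subtype.ext (Prod.ext ?_ ?_) <;>
      simp [pip, revP, swapF, pathRev])

/-- `p` admits continuous local sections over an open cover of the base by `k` sets. -/
def SecCover {E : Type u} {B : Type v} [TopologicalSpace E] [TopologicalSpace B]
    (p : E → B) (k : ℕ) : Prop :=
  ∃ U : Fin k → Set B, (∀ i, IsOpen (U i)) ∧ (⋃ i, U i) = Set.univ ∧
    ∀ i, ∃ s : C(U i, E), ∀ x : U i, p (s x) = (x : B)

/-- The Schwarz genus of a map: minimal number of open sets covering the base over each
of which the map admits a continuous section (`⊤` if there is no such finite cover). -/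
noncomputable def genus {E : Type u} {B : Type v} [TopologicalSpace E] [TopologicalSpace B]
    (p : E → B) : ℕ∞ :=
  sInf {m : ℕ∞ | ∃ k : ℕ, m = (k : ℕ∞) ∧ SecCover p k}

/-- Topological complexity: the Schwarz genus of the two-endpoint path fibration. -/
noncomputable def TCx (X : Type u) [TopologicalSpace X] : ℕ∞ :=
  genus (fun γ : PathSp X => (γ 0, γ 1))

/-- Symmetric topological complexity: `1 +` the Schwarz genus of `π_G`. -/
noncomputable def TCS (X : Type u) [TopologicalSpace X] : ℕ∞ :=
  1 + genus (piG X)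

/-- The unit sphere `Sⁿ ⊆ ℝ^{n+1}`. -/
abbrev Sph (n : ℕ) := Metric.sphere (0 : EuclideanSpace ℝ (Fin (n + 1))) 1

/-!
For a vector `e`, consider the configurations `(x, y)` whose chord `x - y` is not parallel to `e`.
There the component `m` of `e` orthogonal to `x - y` is nonzero and does not change when `x` and
`y` are swapped, so the normalized quadratic curve through `x`, `m`, `y` (at times `0`, `1/2`, `1`)
is a motion plan whose reversal is the plan for `(y, x)`. Two orthogonal vectors give two such
invariant charts covering `F(Sⁿ;2)`, and equivariant sections over invariant open sets descend to
sections of `π_G` over their images in `B(Sⁿ;2)`.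
-/

open Topology
open scoped RealInnerProductSpace

section Quotient

variable {X : Type u} [TopologicalSpace X]

def HasEquivariantSection (W : Set (F2 X)) : Prop :=
  ∃ s : C(W, PpX X), (∀ z : W, pip (s z) = (z : F2 X)) ∧
    ∀ (z : W) (h : swapF (z : F2 X) ∈ W), s ⟨swapF (z : F2 X), h⟩ = revP (s z)

def BX2.mk : C(F2 X, BX2 X) := ⟨Quot.mk _, continuous_quot_mk⟩

def PpQ.mk : C(PpX X, PpQ X) := ⟨Quot.mk _, continuous_quot_mk⟩

lemma BX2.isQuotientMap_mk : IsQuotientMap (BX2.mk : F2 X → BX2 X) := isQuotientMap_quot_mk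

lemma piG_mk (γ : PpX X) : piG X (PpQ.mk γ) = BX2.mk (pip γ) := rfl

lemma PpQ.mk_revP (γ : PpX X) : PpQ.mk (revP γ) = PpQ.mk γ :=
  (Quot.sound (r := fun a b : PpX X => b = revP a) rfl).symm

lemma swapF_swapF (z : F2 X) : swapF (swapF z) = z := rfl

lemma BX2.eq_or_eq_swapF_of_mk_eq {a b : F2 X} (h : BX2.mk a = BX2.mk b) :
    b = a ∨ b = swapF a := by
  have hequiv : Equivalence (fun a b : F2 X => b = a ∨ b = swapF a) :=
    { refl := fun _ => .inl rfl
      symm := by rintro a b (rfl | rfl) <;> simp [swapF_swapF]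
      trans := by rintro a b c (rfl | rfl) (rfl | rfl) <;> simp [swapF_swapF] }
  exact hequiv.eqvGen_iff.mp <| (Quot.eqvGen_exact h).mono fun _ _ hab => .inr hab

lemma BX2.preimage_image_mk {W : Set (F2 X)} (hW : ∀ z ∈ W, swapF z ∈ W) :
    BX2.mk ⁻¹' (BX2.mk '' W) = W := by
  refine Set.Subset.antisymm ?_ (Set.subset_preimage_image _ _)
  rintro b ⟨a, ha, hab⟩
  rcases BX2.eq_or_eq_swapF_of_mk_eq hab with rfl | rfl
  exacts [ha, hW a ha]

lemma BX2.isOpen_image_mk {W : Set (F2 X)} (hW : IsOpen W) (hswap : ∀ z ∈ W, swapF z ∈ W) :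
    IsOpen (BX2.mk '' W) := by
  rwa [← BX2.isQuotientMap_mk.isOpen_preimage, BX2.preimage_image_mk hswap]

/-- The quotient map restricted to an open saturated set is still a quotient map, so the
equivariant section descends along it. -/
lemma exists_section_piG {U : Set (BX2 X)} (hU : IsOpen U)
    (hs : HasEquivariantSection (BX2.mk ⁻¹' U)) :
    ∃ σ : C(U, PpQ X), ∀ u : U, piG X (σ u) = u := by
  obtain ⟨s, hpip, hrev⟩ := hs
  have hq : IsQuotientMap (BX2.mk.restrictPreimage U) :=
    BX2.isQuotientMap_mk.restrictPreimage_isOpen hU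
  have hg : Function.FactorsThrough (PpQ.mk.comp s) (BX2.mk.restrictPreimage U) := by
    rintro ⟨a, ha⟩ ⟨b, hb⟩ hab
    rcases BX2.eq_or_eq_swapF_of_mk_eq (congrArg Subtype.val hab) with rfl | rfl
    · rfl
    · exact (PpQ.mk_revP _).symm.trans (congrArg PpQ.mk (hrev ⟨a, ha⟩ hb)).symm
  refine ⟨hq.lift _ hg, fun u => ?_⟩
  obtain ⟨z, rfl⟩ := hq.surjective u
  rw [← ContinuousMap.comp_apply, hq.lift_comp, ContinuousMap.comp_apply, piG_mk, hpip]
  rfl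

lemma secCover_piG_of_cover {k : ℕ} (W : Fin k → Set (F2 X)) (hopen : ∀ i, IsOpen (W i))
    (hswap : ∀ i, ∀ z ∈ W i, swapF z ∈ W i) (hcover : (⋃ i, W i) = Set.univ)
    (hs : ∀ i, HasEquivariantSection (W i)) :
    SecCover (piG X) k := by
  refine ⟨fun i => BX2.mk '' W i, fun i => BX2.isOpen_image_mk (hopen i) (hswap i), ?_,
    fun i => exists_section_piG (BX2.isOpen_image_mk (hopen i) (hswap i)) ?_⟩
  · refine Set.eq_univ_of_forall (Quot.ind fun z => ?_)
    obtain ⟨i, hi⟩ := Set.mem_iUnion.mp (hcover ▸ Set.mem_univ z)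
    exact Set.mem_iUnion.mpr ⟨i, z, hi, rfl⟩
  · rw [BX2.preimage_image_mk (hswap i)]
    exact hs i

lemma genus_le_of_secCover {E : Type u} {B : Type v} [TopologicalSpace E] [TopologicalSpace B]
    {p : E → B} {k : ℕ} (h : SecCover p k) : genus p ≤ k :=
  sInf_le ⟨k, rfl, h⟩

lemma TCS_le_of_cover {k : ℕ} (W : Fin k → Set (F2 X)) (hopen : ∀ i, IsOpen (W i))
    (hswap : ∀ i, ∀ z ∈ W i, swapF z ∈ W i) (hcover : (⋃ i, W i) = Set.univ)
    (hs : ∀ i, HasEquivariantSection (W i)) :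
    TCS X ≤ 1 + k :=
  add_le_add_right (genus_le_of_secCover (secCover_piG_of_cover W hopen hswap hcover hs)) 1

end Quotient

section Sphere

variable {E : Type*} [NormedAddCommGroup E]

local notation "𝕊" => Metric.sphere (0 : E) 1

def chord (z : F2 𝕊) : E := (z.1.1 : E) - z.1.2

lemma chord_swapF (z : F2 𝕊) : chord (swapF z) = -chord z :=
  (neg_sub _ _).symm

lemma chord_ne_zero (z : F2 𝕊) : chord z ≠ 0 :=
  sub_ne_zero.mpr (Subtype.coe_injective.ne z.2)

lemma continuous_chord : Continuous (chord : F2 𝕊 → E) := by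
  unfold chord; fun_prop

variable [InnerProductSpace ℝ E]

/-- Lagrange interpolation through `x`, `m`, `y` at times `0`, `1/2`, `1`. -/
def quadInterp (x m y : E) (t : ℝ) : E :=
  ((1 - 2 * t) * (1 - t)) • x + (4 * t * (1 - t)) • m + (t * (2 * t - 1)) • y

lemma quadInterp_zero (x m y : E) : quadInterp x m y 0 = x := by
  simp [quadInterp]

lemma quadInterp_one (x m y : E) : quadInterp x m y 1 = y := by
  norm_num [quadInterp]

lemma quadInterp_half (x m y : E) : quadInterp x m y (1 / 2) = m := by
  norm_num [quadInterp]

lemma quadInterp_symm (x m y : E) (t : ℝ) : quadInterp y m x (1 - t) = quadInterp x m y t := by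
  simp only [quadInterp]; module

lemma inner_quadInterp_sub {x m y : E} (hx : ‖x‖ = 1) (hy : ‖y‖ = 1) (hm : ⟪m, x - y⟫ = 0)
    (t : ℝ) : ⟪quadInterp x m y t, x - y⟫ = (1 - 2 * t) * (1 - ⟪x, y⟫) := by
  have hxx : ⟪x, x⟫ = 1 := by rw [real_inner_self_eq_norm_sq, hx, one_pow]
  have hyy : ⟪y, y⟫ = 1 := by rw [real_inner_self_eq_norm_sq, hy, one_pow]
  rw [quadInterp, inner_add_left, inner_add_left, real_inner_smul_left, real_inner_smul_left,
    real_inner_smul_left, hm]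
  simp only [inner_sub_right, hxx, hyy, real_inner_comm x y]
  ring

/-- The inner product with `x - y` vanishes only at `t = 1/2`, where the curve passes through
`m ≠ 0`. -/
lemma quadInterp_ne_zero {x m y : E} (hx : ‖x‖ = 1) (hy : ‖y‖ = 1) (hxy : x ≠ y) (hm : m ≠ 0)
    (hperp : ⟪m, x - y⟫ = 0) (t : ℝ) : quadInterp x m y t ≠ 0 := by
  rcases eq_or_ne t (1 / 2) with rfl | ht
  · rwa [quadInterp_half]
  · intro h0
    have hxy' : ⟪x, y⟫ < 1 := (inner_lt_one_iff_real_of_norm_eq_one hx hy).mpr hxy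
    have := inner_quadInterp_sub hx hy hperp t
    rw [h0, inner_zero_left] at this
    rcases mul_eq_zero.mp this.symm with h | h
    · exact ht (by linarith)
    · linarith

lemma hasEquivariantSection_of_midpoint {W : Set (F2 𝕊)} (m : C(W, E)) (hm : ∀ z, m z ≠ 0)
    (hperp : ∀ z : W, ⟪m z, chord z.1⟫ = 0)
    (hswap : ∀ (z : W) (h : swapF z.1 ∈ W), m ⟨swapF z.1, h⟩ = m z) :
    HasEquivariantSection W := by
  set φ : W × unitInterval → E := fun p => quadInterp (p.1.1.1.1 : E) (m p.1) p.1.1.1.2 p.2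
  have hφ : ∀ p, φ p ≠ 0 := fun p => quadInterp_ne_zero (norm_eq_of_mem_sphere _)
    (norm_eq_of_mem_sphere _) (Subtype.coe_injective.ne p.1.1.2) (hm _) (hperp _) _
  have hφc : Continuous φ := by simp only [φ, quadInterp]; fun_prop
  let γ : C(W × unitInterval, 𝕊) :=
    ⟨fun p => ⟨‖φ p‖⁻¹ • φ p, mem_sphere_zero_iff_norm.mpr (norm_smul_inv_norm (hφ p))⟩,
      ((hφc.norm.inv₀ fun p => norm_ne_zero_iff.mpr (hφ p)).smul hφc).subtype_mk _⟩
  have hγ0 : ∀ z, γ (z, 0) = z.1.1.1 := fun z => by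
    ext1; simp [γ, φ, quadInterp_zero, norm_eq_of_mem_sphere]
  have hγ1 : ∀ z, γ (z, 1) = z.1.1.2 := fun z => by
    ext1; simp [γ, φ, quadInterp_one, norm_eq_of_mem_sphere]
  have hφswap : ∀ z h t, φ (⟨swapF z.1, h⟩, t) = φ (z, unitInterval.symm t) := fun z h t => by
    simp only [φ, hswap z h, unitInterval.coe_symm_eq]
    exact (quadInterp_symm _ _ _ _).symm
  have hγswap : ∀ z h t, γ (⟨swapF z.1, h⟩, t) = γ (z, unitInterval.symm t) := fun z h t =>
    Subtype.ext (by simp only [γ, ContinuousMap.coe_mk, hφswap z h t])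
  have hends : ∀ z : W, γ.curry z 0 ≠ γ.curry z 1 := fun z => by
    simpa only [ContinuousMap.curry_apply, hγ0, hγ1] using z.1.2
  let s : C(W, PpX 𝕊) := ⟨fun z => ⟨γ.curry z, hends z⟩, γ.curry.continuous.subtype_mk hends⟩
  exact ⟨s, fun z => Subtype.ext (Prod.ext (hγ0 z) (hγ1 z)),
    fun z h => Subtype.ext (ContinuousMap.ext (hγswap z h))⟩

noncomputable def perpPart (e d : E) : E := e - (⟪e, d⟫ / ‖d‖ ^ 2) • d

lemma inner_perpPart_self (e d : E) : ⟪perpPart e d, d⟫ = 0 := by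
  rcases eq_or_ne d 0 with rfl | hd
  · simp
  · rw [perpPart, inner_sub_left, real_inner_smul_left, real_inner_self_eq_norm_sq,
      div_mul_cancel₀ _ (by positivity), sub_self]

lemma perpPart_neg (e d : E) : perpPart e (-d) = perpPart e d := by
  simp [perpPart, inner_neg_right, neg_div]

def chordChart (e : E) : Set (F2 𝕊) := {z | perpPart e (chord z) ≠ 0}

lemma continuous_perpPart_chord (e : E) : Continuous fun z : F2 𝕊 => perpPart e (chord z) := by
  have hc := continuous_chord (E := E)
  have hd : ∀ z : F2 𝕊, ‖chord z‖ ^ 2 ≠ 0 := fun z =>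
    pow_ne_zero 2 (norm_ne_zero_iff.mpr (chord_ne_zero z))
  exact continuous_const.sub (((continuous_const.inner hc).div (hc.norm.pow 2) hd).smul hc)

lemma isOpen_chordChart (e : E) : IsOpen (chordChart e : Set (F2 𝕊)) :=
  isOpen_ne_fun (continuous_perpPart_chord e) continuous_const

lemma swapF_mem_chordChart (e : E) :
    ∀ z ∈ (chordChart e : Set (F2 𝕊)), swapF z ∈ chordChart e := by
  intro z hz
  show perpPart e (chord (swapF z)) ≠ 0
  rwa [chord_swapF, perpPart_neg]

lemma chordChart_union_chordChart {e₁ e₂ : E} (h₁ : e₁ ≠ 0) (h₂ : e₂ ≠ 0) (h : ⟪e₁, e₂⟫ = 0) :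
    (chordChart e₁ ∪ chordChart e₂ : Set (F2 𝕊)) = Set.univ := by
  refine Set.eq_univ_of_forall fun z => ?_
  by_contra hz
  simp only [chordChart, Set.mem_union, Set.mem_ofPred_eq, not_or, not_not, perpPart,
    sub_eq_zero] at hz
  obtain ⟨he₁, he₂⟩ := hz
  generalize ⟪e₁, chord z⟫ / ‖chord z‖ ^ 2 = c₁ at he₁
  generalize ⟪e₂, chord z⟫ / ‖chord z‖ ^ 2 = c₂ at he₂
  subst he₁ he₂
  rw [real_inner_smul_left, real_inner_smul_right, real_inner_self_eq_norm_sq] at h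
  rw [smul_ne_zero_iff] at h₁ h₂
  exact mul_ne_zero h₁.1 (mul_ne_zero h₂.1 (pow_ne_zero 2 (norm_ne_zero_iff.mpr h₁.2))) h

lemma hasEquivariantSection_chordChart (e : E) :
    HasEquivariantSection (chordChart e : Set (F2 𝕊)) :=
  hasEquivariantSection_of_midpoint
    ⟨fun z => perpPart e (chord z.1), (continuous_perpPart_chord e).comp continuous_subtype_val⟩
    (fun z => z.2) (fun z => inner_perpPart_self _ _)
    (fun z _ => by simp only [ContinuousMap.coe_mk, chord_swapF, perpPart_neg])

end Sphere

/-- For `n ≥ 1`, `F(Sⁿ;2)` is covered by two invariant open sets over which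
`π'` admits continuous equivariant sections; consequently `TC^S(Sⁿ) ≤ 3`. -/
theorem stmt7 (n : ℕ) (hn : 1 ≤ n) :
    (∃ W₁ W₂ : Set (F2 (Sph n)),
      IsOpen W₁ ∧ IsOpen W₂ ∧
      (∀ z ∈ W₁, swapF z ∈ W₁) ∧ (∀ z ∈ W₂, swapF z ∈ W₂) ∧
      W₁ ∪ W₂ = Set.univ ∧
      (∃ s : C(W₁, PpX (Sph n)),
        (∀ z : W₁, pip (s z) = (z : F2 (Sph n))) ∧
        (∀ (z : W₁) (h : swapF (z : F2 (Sph n)) ∈ W₁),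
          s ⟨swapF (z : F2 (Sph n)), h⟩ = revP (s z))) ∧
      (∃ s : C(W₂, PpX (Sph n)),
        (∀ z : W₂, pip (s z) = (z : F2 (Sph n))) ∧
        (∀ (z : W₂) (h : swapF (z : F2 (Sph n)) ∈ W₂),
          s ⟨swapF (z : F2 (Sph n)), h⟩ = revP (s z)))) ∧
    TCS (Sph n) ≤ 3 := by
  let e₁ : EuclideanSpace ℝ (Fin (n + 1)) := EuclideanSpace.single 0 1
  let e₂ : EuclideanSpace ℝ (Fin (n + 1)) := EuclideanSpace.single ⟨1, by omega⟩ 1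
  have he₁ : e₁ ≠ 0 := by simp [e₁]
  have he₂ : e₂ ≠ 0 := by simp [e₂]
  have horth : ⟪e₁, e₂⟫ = 0 := by simp [e₁, e₂, EuclideanSpace.inner_single_left, Fin.ext_iff]
  have hcover := chordChart_union_chordChart he₁ he₂ horth
  refine ⟨⟨chordChart e₁, chordChart e₂, isOpen_chordChart e₁, isOpen_chordChart e₂,
    swapF_mem_chordChart e₁, swapF_mem_chordChart e₂, hcover,
    hasEquivariantSection_chordChart e₁, hasEquivariantSection_chordChart e₂⟩, ?_⟩
  calc TCS (Sph n) ≤ 1 + (2 : ℕ) :=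
        TCS_le_of_cover ![chordChart e₁, chordChart e₂]
          (Fin.forall_fin_two.mpr ⟨isOpen_chordChart e₁, isOpen_chordChart e₂⟩)
          (Fin.forall_fin_two.mpr ⟨swapF_mem_chordChart e₁, swapF_mem_chordChart e₂⟩)
          (by rw [← hcover]; ext; simp [Fin.exists_fin_two])
          (Fin.forall_fin_two.mpr
            ⟨hasEquivariantSection_chordChart e₁, hasEquivariantSection_chordChart e₂⟩)
    _ = 3 := rfl
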